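/- arXiv:2507.02120 — 2 statements merged into one kernel-verified Lean document; each statement's English description precedes it below -/
import Mathlib

section
/- Every multivariate polynomial p₃ of degree at most 3 in n variables can be written as p₃(x) = Σ_{i=1}^n x_i p₂^i(x) + Σ_{i=1}^n (1−x_i) q₂^i(x) + β₂(x) for all x ∈ ℝ^n, where each p₂^i, q₂^i, β₂ is a convex polynomial of degree at most 2. -/
/-! Functions with such a decomposition are closed under addition and contain every convex
quadratic `f`, every `x i * f` and every `(1 - x i) * f`. Hence they contain
`a (v ⬝ᵥ x)² = ∑ j, x j * (a v j (v ⬝ᵥ x))` for `a` of either sign, and then `x i * a (v ⬝ᵥ x)²`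
for either sign too: for `a < 0` it equals `(1 - x i) * (-a (v ⬝ᵥ x)²) + a (v ⬝ᵥ x)²`.
Polarisation `2 x j x k = (x j + x k)² - x j² - x k²` then yields every cubic monomial. -/

open Matrix Finset

/-- A convex polynomial of degree at most 2: a convex function of the form
`x ↦ xᵀ P x + rᵀ x + w`. -/
def IsConvexQuad {n : ℕ} (q : (Fin n → ℝ) → ℝ) : Prop :=
  ConvexOn ℝ Set.univ q ∧
    ∃ (P : Matrix (Fin n) (Fin n) ℝ) (r : Fin n → ℝ) (w : ℝ),
      ∀ x, q x = x ⬝ᵥ P.mulVec x + r ⬝ᵥ x + w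

variable {n : ℕ}

lemma IsConvexQuad.add {f g : (Fin n → ℝ) → ℝ} (hf : IsConvexQuad f) (hg : IsConvexQuad g) :
    IsConvexQuad fun x => f x + g x := by
  obtain ⟨hf, P, r, w, hfe⟩ := hf
  obtain ⟨hg, Q, s, v, hge⟩ := hg
  refine ⟨hf.add hg, P + Q, r + s, w + v, fun x => ?_⟩
  show f x + g x = _
  rw [hfe, hge, add_mulVec, dotProduct_add, add_dotProduct]
  ring

lemma isConvexQuad_affine (r : Fin n → ℝ) (w : ℝ) : IsConvexQuad fun x => r ⬝ᵥ x + w :=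
  ⟨((dotProductBilin ℝ ℝ r).convexOn convex_univ).add_const w, 0, r, w, by simp⟩

lemma isConvexQuad_const (w : ℝ) : IsConvexQuad fun _ : Fin n → ℝ => w := by
  simpa using isConvexQuad_affine (0 : Fin n → ℝ) w

lemma isConvexQuad_linear (r : Fin n → ℝ) : IsConvexQuad fun x => r ⬝ᵥ x := by
  simpa using isConvexQuad_affine r 0

lemma isConvexQuad_mul_sq {a : ℝ} (ha : 0 ≤ a) (v : Fin n → ℝ) :
    IsConvexQuad fun x => a * (v ⬝ᵥ x) ^ 2 := by
  have hsq : ConvexOn ℝ Set.univ fun x => (v ⬝ᵥ x) ^ 2 :=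
    (Even.convexOn_pow (𝕜 := ℝ) even_two).comp_linearMap (dotProductBilin ℝ ℝ v)
  refine ⟨hsq.smul ha, a • vecMulVec v v, 0, 0, fun x => ?_⟩
  rw [smul_mulVec, vecMulVec_mulVec, dotProduct_smul, dotProduct_smul]
  simp [dotProduct_comm x v, sq]

def HasSLCDecomposition (f : (Fin n → ℝ) → ℝ) : Prop :=
  ∃ (p q : Fin n → (Fin n → ℝ) → ℝ) (β : (Fin n → ℝ) → ℝ),
    (∀ i, IsConvexQuad (p i)) ∧ (∀ i, IsConvexQuad (q i)) ∧ IsConvexQuad β ∧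
      ∀ x, f x = ∑ i, x i * p i x + ∑ i, (1 - x i) * q i x + β x

namespace HasSLCDecomposition

variable {f g : (Fin n → ℝ) → ℝ}

lemma congr (hf : HasSLCDecomposition f) (hfg : ∀ x, f x = g x) : HasSLCDecomposition g := by
  obtain ⟨p, q, β, hp, hq, hβ, hf⟩ := hf
  exact ⟨p, q, β, hp, hq, hβ, fun x => hfg x ▸ hf x⟩

lemma add (hf : HasSLCDecomposition f) (hg : HasSLCDecomposition g) :
    HasSLCDecomposition fun x => f x + g x := by
  obtain ⟨p, q, β, hp, hq, hβ, hf⟩ := hf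
  obtain ⟨p', q', β', hp', hq', hβ', hg⟩ := hg
  refine ⟨fun i x => p i x + p' i x, fun i x => q i x + q' i x, fun x => β x + β' x,
    fun i => (hp i).add (hp' i), fun i => (hq i).add (hq' i), hβ.add hβ', fun x => ?_⟩
  simp only [hf x, hg x, mul_add, sum_add_distrib]
  ring

lemma of_isConvexQuad (hf : IsConvexQuad f) : HasSLCDecomposition f :=
  ⟨0, 0, f, fun _ => isConvexQuad_const 0, fun _ => isConvexQuad_const 0, hf, by simp⟩

lemma sum {ι : Type*} (s : Finset ι) {F : ι → (Fin n → ℝ) → ℝ}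
    (hF : ∀ a ∈ s, HasSLCDecomposition (F a)) : HasSLCDecomposition fun x => ∑ a ∈ s, F a x := by
  classical
  induction s using Finset.induction_on with
  | empty => simpa using of_isConvexQuad (isConvexQuad_const (n := n) 0)
  | insert a s has ih =>
    refine ((hF a (mem_insert_self a s)).add (ih fun b hb => hF b (mem_insert_of_mem hb))).congr
      fun x => ?_
    rw [sum_insert has]

lemma coord_mul (i : Fin n) (hf : IsConvexQuad f) : HasSLCDecomposition fun x => x i * f x := by
  classical
  refine ⟨fun j x => if j = i then f x else 0, 0, 0, fun j => ?_, fun _ => isConvexQuad_const 0,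
    isConvexQuad_const 0, fun x => by simp⟩
  by_cases hj : j = i <;> simp [hj, hf, isConvexQuad_const]

lemma one_sub_coord_mul (i : Fin n) (hf : IsConvexQuad f) :
    HasSLCDecomposition fun x => (1 - x i) * f x := by
  classical
  refine ⟨0, fun j x => if j = i then f x else 0, 0, fun _ => isConvexQuad_const 0, fun j => ?_,
    isConvexQuad_const 0, fun x => by simp⟩
  by_cases hj : j = i <;> simp [hj, hf, isConvexQuad_const]

lemma mul_sq (a : ℝ) (v : Fin n → ℝ) : HasSLCDecomposition fun x => a * (v ⬝ᵥ x) ^ 2 := by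
  refine (sum univ fun j _ => coord_mul j (isConvexQuad_linear ((a * v j) • v))).congr fun x => ?_
  have hterm : ∀ j, x j * ((a * v j) • v ⬝ᵥ x) = v j * x j * (a * (v ⬝ᵥ x)) := fun j => by
    rw [smul_dotProduct, smul_eq_mul]
    ring
  rw [sum_congr rfl fun j _ => hterm j, ← sum_mul]
  change v ⬝ᵥ x * _ = _
  ring

lemma coord_mul_mul_sq (i : Fin n) (a : ℝ) (v : Fin n → ℝ) :
    HasSLCDecomposition fun x => x i * (a * (v ⬝ᵥ x) ^ 2) := by
  rcases le_or_gt 0 a with ha | ha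
  · exact coord_mul i (isConvexQuad_mul_sq ha v)
  · refine ((one_sub_coord_mul i (isConvexQuad_mul_sq (neg_nonneg.2 ha.le) v)).add
      (mul_sq a v)).congr fun x => ?_
    ring

lemma coord_mul_coord_mul_coord (c : ℝ) (i j k : Fin n) :
    HasSLCDecomposition fun x => c * (x i * (x j * x k)) := by
  have hjk := coord_mul_mul_sq i (c / 2) (Pi.single j 1 + Pi.single k 1)
  have hj := coord_mul_mul_sq i (-c / 2) (Pi.single j 1)
  have hk := coord_mul_mul_sq i (-c / 2) (Pi.single k 1)
  refine ((hjk.add hj).add hk).congr fun x => ?_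
  simp only [add_dotProduct, single_one_dotProduct]
  ring

lemma coord_mul_coord (c : ℝ) (i j : Fin n) : HasSLCDecomposition fun x => c * (x i * x j) :=
  (coord_mul i (isConvexQuad_linear (Pi.single j c))).congr fun x => by
    rw [single_dotProduct]
    ring

lemma mul_prod_map (c : ℝ) {m : Multiset (Fin n)} (hm : Multiset.card m ≤ 3) :
    HasSLCDecomposition fun x => c * (m.map x).prod := by
  interval_cases h : Multiset.card m
  · obtain rfl := Multiset.card_eq_zero.mp h
    simpa using of_isConvexQuad (isConvexQuad_const c)
  · obtain ⟨i, rfl⟩ := Multiset.card_eq_one.mp h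
    simpa [single_dotProduct] using of_isConvexQuad (isConvexQuad_linear (Pi.single i c))
  · obtain ⟨i, j, rfl⟩ := Multiset.card_eq_two.mp h
    simpa using coord_mul_coord c i j
  · obtain ⟨i, j, k, rfl⟩ := Multiset.card_eq_three.mp h
    simpa using coord_mul_coord_mul_coord c i j k

end HasSLCDecomposition

lemma hasSLCDecomposition_eval {p : MvPolynomial (Fin n) ℝ} (hp : p.totalDegree ≤ 3) :
    HasSLCDecomposition fun x => MvPolynomial.eval x p := by
  refine (HasSLCDecomposition.sum p.support fun d hd => ?_).congr
    fun x => (MvPolynomial.eval_eq' x p).symm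
  have hcard : Multiset.card d.toMultiset ≤ 3 := by
    rw [Finsupp.card_toMultiset]
    exact (MvPolynomial.le_totalDegree hd).trans hp
  refine (HasSLCDecomposition.mul_prod_map (p.coeff d) hcard).congr fun x => ?_
  rw [Finsupp.toMultiset_map, Finsupp.prod_toMultiset,
    Finsupp.prod_mapDomain_index (fun _ => pow_zero _) (fun _ _ _ => pow_add _ _ _),
    Finsupp.prod_pow]

/-- Every polynomial of degree at most 3 admits an SLC decomposition
`p₃(x) = Σ_i x_i p₂^i(x) + Σ_i (1−x_i) q₂^i(x) + β₂(x)` with all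
`p₂^i, q₂^i, β₂` convex quadratics. -/
theorem slc_decomposition_degree3 {n : ℕ} (p₃ : MvPolynomial (Fin n) ℝ)
    (hdeg : p₃.totalDegree ≤ 3) :
    ∃ (p₂ q₂ : Fin n → (Fin n → ℝ) → ℝ) (β₂ : (Fin n → ℝ) → ℝ),
      (∀ i, IsConvexQuad (p₂ i)) ∧ (∀ i, IsConvexQuad (q₂ i)) ∧ IsConvexQuad β₂ ∧
      ∀ x : Fin n → ℝ,
        MvPolynomial.eval x p₃ =
          ∑ i, x i * p₂ i x + ∑ i, (1 - x i) * q₂ i x + β₂ x :=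
  hasSLCDecomposition_eval hdeg
end

section
/- Let p₃ be a degree-3 polynomial in n variables with cubic coefficients c³_{ijk} (i ≤ j ≤ k), quadratic coefficient matrix B, linear coefficients b, and constant η. Define symmetric-free matrices F^i by F^i_{jk} = c³_{ijk}, and let α = max(0, max_i max_k(Σ_{j≠k}|F^i_{kj}| − F^i_{kk}), max_k(Σ_{j≠k}|B_{kj}| − B_{kk})). Then with p₂^i(x) = x^T F^i x + α‖x‖² − α(n+1)x_i, q₂^i(x) = α‖x‖², β₂(x) = x^T B x + b^T x + η + α‖x‖², the identity Σ_i x_i p₂^i(x) + Σ_i (1−x_i) q₂^i(x) + β₂(x) = p₃(x) holds for all x ∈ ℝ^n. -/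
open Matrix Finset

/-- The explicit degree-3 SLC construction of Theorem 1: with
`F^i_{jk} = c³_{ijk}` for `i ≤ j ≤ k` (and `0` otherwise) and the Gershgorin
shift `α`, the identity `Σ_i x_i p₂^i(x) + Σ_i (1−x_i) q₂^i(x) + β₂(x) = p₃(x)`
holds for all `x` (`∑ l, x l ^ 2` is the squared Euclidean norm `‖x‖²`). -/
theorem explicit_slc_degree3_identity {n : ℕ} (hn : 0 < n)
    (c3 : Fin n → Fin n → Fin n → ℝ)
    (B : Matrix (Fin n) (Fin n) ℝ) (b : Fin n → ℝ) (η : ℝ)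
    (F : Fin n → Matrix (Fin n) (Fin n) ℝ)
    (hF : ∀ i j k, F i j k = if i ≤ j ∧ j ≤ k then c3 i j k else 0)
    (α : ℝ)
    (hα : α = max 0 (max
      (Finset.univ.sup' ⟨⟨0, hn⟩, Finset.mem_univ _⟩ (fun i =>
        Finset.univ.sup' ⟨⟨0, hn⟩, Finset.mem_univ _⟩ (fun k =>
          ∑ j ∈ Finset.univ.erase k, |F i k j| - F i k k)))
      (Finset.univ.sup' ⟨⟨0, hn⟩, Finset.mem_univ _⟩ (fun k =>
        ∑ j ∈ Finset.univ.erase k, |B k j| - B k k)))) :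
    ∀ x : Fin n → ℝ,
      ∑ i, x i * (x ⬝ᵥ (F i).mulVec x + α * ∑ l, x l ^ 2 - α * (n + 1) * x i)
        + ∑ i, (1 - x i) * (α * ∑ l, x l ^ 2)
        + (x ⬝ᵥ B.mulVec x + b ⬝ᵥ x + η + α * ∑ l, x l ^ 2)
      = (∑ i, ∑ j, ∑ k, if i ≤ j ∧ j ≤ k then c3 i j k * (x i * x j * x k) else 0)
        + x ⬝ᵥ B.mulVec x + b ⬝ᵥ x + η := by
  intro x
  have hcube : ∑ i, x i * (x ⬝ᵥ (F i).mulVec x)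
      = ∑ i, ∑ j, ∑ k, if i ≤ j ∧ j ≤ k then c3 i j k * (x i * x j * x k) else 0 := by
    refine Finset.sum_congr rfl fun i _ => ?_
    simp only [dotProduct, mulVec, hF, Finset.mul_sum, mul_ite, ite_mul, mul_zero, zero_mul]
    refine Finset.sum_congr rfl fun j _ => Finset.sum_congr rfl fun k _ => ?_
    split <;> ring
  have hsq : ∑ i, x i * x i = ∑ l, x l ^ 2 := by
    simp [sq]
  have expand : ∀ i ∈ Finset.univ, x i * (x ⬝ᵥ (F i).mulVec x + α * ∑ l, x l ^ 2 - α * (n + 1) * x i)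
      = x i * (x ⬝ᵥ (F i).mulVec x) + α * (∑ l, x l ^ 2) * x i - α * (n + 1) * (x i * x i) :=
    fun i _ => by ring
  have expand2 : ∀ i ∈ Finset.univ, (1 - x i) * (α * ∑ l, x l ^ 2)
      = (α * ∑ l, x l ^ 2) - (α * ∑ l, x l ^ 2) * x i :=
    fun i _ => by ring
  rw [Finset.sum_congr rfl expand, Finset.sum_congr rfl expand2,
    Finset.sum_sub_distrib, Finset.sum_sub_distrib, Finset.sum_add_distrib,
    ← Finset.mul_sum, ← Finset.mul_sum, ← Finset.mul_sum, hsq, hcube,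
    Finset.sum_const, Finset.card_univ, Fintype.card_fin, nsmul_eq_mul]
  push_cast
  ring
end
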